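/- No positive integer number of regular tetrahedra can close up exactly around a common edge: there is no natural number n > 0 such that n * Real.arccos (1/3) = 2 * π. -/
import Mathlib

open Real

lemma cos_two_pi_div_five : Real.cos (2 * π / 5) = (√5 - 1) / 4 := by
  have h : (2:ℝ) * π / 5 = 2 * (π / 5) := by ring
  rw [h, Real.cos_two_mul, Real.cos_pi_div_five]
  have h5 : (√5) ^ 2 = 5 := Real.sq_sqrt (by norm_num)
  nlinarith [h5]

lemma arccos_third_lb : π / 3 < Real.arccos (1 / 3) := by
  have h := Real.arccos_cos (x := π / 3) (by positivity)
    (by linarith [Real.pi_pos])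
  rw [Real.cos_pi_div_three] at h
  rw [← h]
  exact Real.strictAntiOn_arccos (by norm_num) (by norm_num) (by norm_num)

lemma arccos_third_ub : Real.arccos (1 / 3) < 2 * π / 5 := by
  have hpi := Real.pi_pos
  have h := Real.arccos_cos (x := 2 * π / 5) (by positivity) (by linarith)
  rw [cos_two_pi_div_five] at h
  rw [← h]
  have h5 : (√5) ^ 2 = 5 := Real.sq_sqrt (by norm_num)
  have hlt : (√5 - 1) / 4 < 1 / 3 := by nlinarith [Real.sqrt_nonneg 5]
  exact Real.strictAntiOn_arccos (by constructor <;> nlinarith [Real.sqrt_nonneg 5])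
    (by norm_num) hlt

theorem tetrahedra_do_not_close_around_edge :
    ¬ ∃ n : ℕ, 0 < n ∧ (n : ℝ) * Real.arccos (1 / 3) = 2 * Real.pi := by
  rintro ⟨n, hn, heq⟩
  have hpi := Real.pi_pos
  have h1 := arccos_third_lb
  have h2 := arccos_third_ub
  have hn5 : (5:ℝ) < n := by nlinarith [Nat.cast_pos (α := ℝ) |>.mpr hn]
  have hn6 : (n:ℝ) < 6 := by nlinarith [Nat.cast_pos (α := ℝ) |>.mpr hn]
  have : (5:ℕ) < n := by exact_mod_cast hn5
  have : n < 6 := by exact_mod_cast hn6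
  omega
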